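/- arXiv:1609.00594 — 2 statements merged into one kernel-verified Lean document; each statement's English description precedes it below -/
import Mathlib

section
/- Fix P > 0 and define the information density i_P : ℝ × ℝ → ℝ by i_P(x, y) := (1/2)·log(1 + P) − (y − x)²/2 + y²/(2(1 + P)). Let X ~ N(0, P) and Z ~ N(0, 1) be independent Gaussian random variables and set Y = X + Z. Then E[i_P(X, Y)] = (1/2)·log(1 + P) and Var(i_P(X, Y)) = P/(1 + P). -/
open MeasureTheory ProbabilityTheory Real
open scoped NNReal

/-! Substituting `Y = X + Z`, the information density becomes `C(P) + a X² + b XZ + c Z²` with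
`a = 1/(2(1+P))`, `b = 1/(1+P)` and `c = -P/(2(1+P))`. For independent centred `X` and `Z` the
monomials `X²`, `XZ`, `Z²` are pairwise uncorrelated, so the mean is `C(P) + aP + c = C(P)` and the
variance is `a² Var[X²] + b² P + c² Var[Z²] = 2a²P² + b²P + 2c² = P/(1+P)`. The Gaussian moments
`E[X²] = v` and `E[X⁴] = 3v²` are the derivatives at `0` of the moment generating function
`exp (v t² / 2)`. -/

lemma hasDerivAt_mul_exp_mul_sq_div_two (v : ℝ) {p : ℝ → ℝ} {p' t : ℝ} (hp : HasDerivAt p p' t) :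
    HasDerivAt (fun s ↦ p s * exp (v * s ^ 2 / 2)) ((p' + v * t * p t) * exp (v * t ^ 2 / 2)) t := by
  have hE : HasDerivAt (fun s ↦ v * s ^ 2 / 2) (v * t) t :=
    (((hasDerivAt_pow 2 t).const_mul v).div_const 2).congr_deriv (by norm_num; ring)
  exact (hp.mul hE.exp).congr_deriv (by ring)

lemma deriv_mul_exp_mul_sq_div_two (v : ℝ) {p p' q : ℝ → ℝ} (hp : ∀ t, HasDerivAt p (p' t) t)
    (hq : ∀ t, q t = p' t + v * t * p t) :
    deriv (fun t ↦ p t * exp (v * t ^ 2 / 2)) = fun t ↦ q t * exp (v * t ^ 2 / 2) :=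
  funext fun t ↦ by rw [hq]; exact (hasDerivAt_mul_exp_mul_sq_div_two v (hp t)).deriv

lemma iteratedDeriv_exp_mul_sq_div_two (v : ℝ) :
    iteratedDeriv 2 (fun t ↦ exp (v * t ^ 2 / 2)) 0 = v ∧
    iteratedDeriv 4 (fun t ↦ exp (v * t ^ 2 / 2)) 0 = 3 * v ^ 2 := by
  have hid := hasDerivAt_id' (𝕜 := ℝ)
  have d1 : deriv (fun t ↦ exp (v * t ^ 2 / 2)) = fun t ↦ v * t * exp (v * t ^ 2 / 2) := by
    simpa using deriv_mul_exp_mul_sq_div_two v (fun t ↦ hasDerivAt_const t (1 : ℝ))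
      (q := fun t ↦ v * t) (fun t ↦ by ring)
  have d2 : deriv (fun t ↦ v * t * exp (v * t ^ 2 / 2)) =
      fun t ↦ (v + v ^ 2 * t ^ 2) * exp (v * t ^ 2 / 2) :=
    deriv_mul_exp_mul_sq_div_two v (fun t ↦ (hid t).const_mul v) (fun t ↦ by ring)
  have d3 : deriv (fun t ↦ (v + v ^ 2 * t ^ 2) * exp (v * t ^ 2 / 2)) =
      fun t ↦ (3 * v ^ 2 * t + v ^ 3 * t ^ 3) * exp (v * t ^ 2 / 2) :=
    deriv_mul_exp_mul_sq_div_two v (fun t ↦ (((hid t).pow 2).const_mul (v ^ 2)).const_add v)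
      (fun t ↦ by norm_num; ring)
  have d4 : deriv (fun t ↦ (3 * v ^ 2 * t + v ^ 3 * t ^ 3) * exp (v * t ^ 2 / 2)) =
      fun t ↦ (3 * v ^ 2 + 6 * v ^ 3 * t ^ 2 + v ^ 4 * t ^ 4) * exp (v * t ^ 2 / 2) :=
    deriv_mul_exp_mul_sq_div_two v
      (fun t ↦ ((hid t).const_mul (3 * v ^ 2)).add (((hid t).pow 3).const_mul (v ^ 3)))
      (fun t ↦ by norm_num; ring)
  simp only [iteratedDeriv_succ, iteratedDeriv_zero, d1, d2, d3, d4]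
  norm_num

namespace ProbabilityTheory

variable {v : ℝ≥0}

lemma integrable_pow_gaussianReal (m : ℝ) (n : ℕ) :
    Integrable (fun x ↦ x ^ n) (gaussianReal m v) :=
  integrable_pow_of_mem_interior_integrableExpSet (X := id) (by simp) n

lemma integral_pow_gaussianReal_eq_iteratedDeriv (n : ℕ) :
    ∫ x, x ^ n ∂gaussianReal 0 v = iteratedDeriv n (fun t ↦ exp (v * t ^ 2 / 2)) 0 := by
  have hmgf : mgf id (gaussianReal 0 v) = fun t ↦ exp (v * t ^ 2 / 2) := by
    simp [mgf_id_gaussianReal]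
  rw [← hmgf, iteratedDeriv_mgf_zero (by simp)]
  rfl

lemma integral_sq_gaussianReal : ∫ x, x ^ 2 ∂gaussianReal 0 v = v := by
  rw [integral_pow_gaussianReal_eq_iteratedDeriv, (iteratedDeriv_exp_mul_sq_div_two v).1]

lemma integral_pow_four_gaussianReal : ∫ x, x ^ 4 ∂gaussianReal 0 v = 3 * (v : ℝ) ^ 2 := by
  rw [integral_pow_gaussianReal_eq_iteratedDeriv, (iteratedDeriv_exp_mul_sq_div_two v).2]

variable {Ω : Type*} {mΩ : MeasurableSpace Ω} {μ : Measure Ω} {X Z : Ω → ℝ}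

lemma HasLaw.integral_pow {ν : Measure ℝ} (hX : HasLaw X ν μ) (n : ℕ) :
    ∫ ω, X ω ^ n ∂μ = ∫ x, x ^ n ∂ν :=
  hX.integral_comp (f := fun x ↦ x ^ n) (by fun_prop)

lemma HasLaw.integrable_pow {ν : Measure ℝ} (hX : HasLaw X ν μ) {n : ℕ}
    (hn : Integrable (fun x ↦ x ^ n) ν) : Integrable (fun ω ↦ X ω ^ n) μ :=
  (integrable_map_measure (g := fun x ↦ x ^ n) (hX.map_eq ▸ hn.aestronglyMeasurable)
    hX.aemeasurable).1 (hX.map_eq ▸ hn)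

lemma IndepFun.integrable_pow_mul_pow (hXZ : IndepFun X Z μ)
    (hX : ∀ n : ℕ, Integrable (fun ω ↦ X ω ^ n) μ) (hZ : ∀ n : ℕ, Integrable (fun ω ↦ Z ω ^ n) μ)
    (i j : ℕ) :
    Integrable (fun ω ↦ X ω ^ i * Z ω ^ j) μ :=
  (hXZ.comp (measurable_id.pow_const i) (measurable_id.pow_const j)).integrable_mul (hX i) (hZ j)

lemma IndepFun.integral_pow_mul_pow (hXZ : IndepFun X Z μ)
    (hX : ∀ n : ℕ, Integrable (fun ω ↦ X ω ^ n) μ) (hZ : ∀ n : ℕ, Integrable (fun ω ↦ Z ω ^ n) μ)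
    (i j : ℕ) :
    ∫ ω, X ω ^ i * Z ω ^ j ∂μ = (∫ ω, X ω ^ i ∂μ) * ∫ ω, Z ω ^ j ∂μ :=
  (hXZ.comp (measurable_id.pow_const i) (measurable_id.pow_const j)).integral_fun_mul_eq_mul_integral
    (hX i).aestronglyMeasurable (hZ j).aestronglyMeasurable

lemma IndepFun.integral_quadratic [IsProbabilityMeasure μ] (hXZ : IndepFun X Z μ)
    (hX : ∀ n : ℕ, Integrable (fun ω ↦ X ω ^ n) μ) (hZ : ∀ n : ℕ, Integrable (fun ω ↦ Z ω ^ n) μ)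
    (a b c d : ℝ) :
    ∫ ω, a * X ω ^ 2 + b * (X ω * Z ω) + c * Z ω ^ 2 + d ∂μ =
      a * ∫ ω, X ω ^ 2 ∂μ + b * ((∫ ω, X ω ∂μ) * ∫ ω, Z ω ∂μ) + c * ∫ ω, Z ω ^ 2 ∂μ + d := by
  have hXZ1 := hXZ.integrable_pow_mul_pow hX hZ 1 1
  have hprod := hXZ.integral_pow_mul_pow hX hZ 1 1
  simp only [pow_one] at hXZ1 hprod
  rw [integral_add (by fun_prop) (by fun_prop), integral_add (by fun_prop) (by fun_prop),
    integral_add (by fun_prop) (by fun_prop)]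
  simp [integral_const_mul, hprod]

lemma IndepFun.variance_quadratic [IsProbabilityMeasure μ] (hXZ : IndepFun X Z μ)
    (hX : ∀ n : ℕ, Integrable (fun ω ↦ X ω ^ n) μ) (hZ : ∀ n : ℕ, Integrable (fun ω ↦ Z ω ^ n) μ)
    (hX₀ : ∫ ω, X ω ∂μ = 0) (hZ₀ : ∫ ω, Z ω ∂μ = 0) (a b c : ℝ) :
    variance (fun ω ↦ a * X ω ^ 2 + b * (X ω * Z ω) + c * Z ω ^ 2) μ =
      a ^ 2 * (∫ ω, X ω ^ 4 ∂μ - (∫ ω, X ω ^ 2 ∂μ) ^ 2) +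
      b ^ 2 * ((∫ ω, X ω ^ 2 ∂μ) * ∫ ω, Z ω ^ 2 ∂μ) +
      c ^ 2 * (∫ ω, Z ω ^ 4 ∂μ - (∫ ω, Z ω ^ 2 ∂μ) ^ 2) := by
  have hmono := hXZ.integrable_pow_mul_pow hX hZ
  -- every monomial is written as `X ^ i * Z ^ j`, the shape of `hmono` and `integral_pow_mul_pow`
  have hsq : (fun ω ↦ (a * X ω ^ 2 + b * (X ω * Z ω) + c * Z ω ^ 2) ^ 2) = fun ω ↦
      a ^ 2 * (X ω ^ 4 * Z ω ^ 0) + 2 * a * b * (X ω ^ 3 * Z ω ^ 1) +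
      (b ^ 2 + 2 * a * c) * (X ω ^ 2 * Z ω ^ 2) + 2 * b * c * (X ω ^ 1 * Z ω ^ 3) +
      c ^ 2 * (X ω ^ 0 * Z ω ^ 4) := by
    ext ω; ring
  have hXZ1 : Integrable (fun ω ↦ X ω * Z ω) μ := by simpa using hmono 1 1
  have hmemLp : MemLp (fun ω ↦ a * X ω ^ 2 + b * (X ω * Z ω) + c * Z ω ^ 2) 2 μ :=
    (memLp_two_iff_integrable_sq (by fun_prop)).2 (hsq ▸ by fun_prop)
  have hmean := hXZ.integral_quadratic hX hZ a b c 0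
  simp only [add_zero] at hmean
  rw [variance_eq_sub hmemLp, hmean]
  simp only [Pi.pow_apply]
  rw [hsq, integral_add (by fun_prop) (by fun_prop), integral_add (by fun_prop) (by fun_prop),
    integral_add (by fun_prop) (by fun_prop), integral_add (by fun_prop) (by fun_prop)]
  simp only [integral_const_mul, hXZ.integral_pow_mul_pow hX hZ]
  simp only [pow_zero, pow_one, integral_const, probReal_univ, smul_eq_mul, hX₀, hZ₀]
  ring

end ProbabilityTheory

/-- For the AWGN channel `Y = X + Z` with `X ~ N(0, P)`, `Z ~ N(0, 1)`
independent, the information density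
`i_P(x, y) = (1/2) log (1 + P) − (y − x)²/2 + y²/(2(1 + P))` satisfies
`E[i_P(X, Y)] = (1/2) log (1 + P)` and `Var(i_P(X, Y)) = P/(1 + P)`. -/
theorem awgn_information_density_moments
    {Ω : Type*} [MeasureSpace Ω] [IsProbabilityMeasure (ℙ : Measure Ω)]
    (P : ℝ) (hP : 0 < P)
    (X Z : Ω → ℝ) (hX : Measurable X) (hZ : Measurable Z)
    (hXlaw : Measure.map X (ℙ : Measure Ω) = gaussianReal 0 (Real.toNNReal P))
    (hZlaw : Measure.map Z (ℙ : Measure Ω) = gaussianReal 0 1)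
    (hindep : IndepFun X Z (ℙ : Measure Ω))
    (iP : ℝ → ℝ → ℝ)
    (hiP : ∀ x y, iP x y = (1/2) * Real.log (1 + P) - (y - x)^2/2 + y^2/(2*(1 + P))) :
    (∫ ω, iP (X ω) (X ω + Z ω)) = (1/2) * Real.log (1 + P) ∧
    variance (fun ω => iP (X ω) (X ω + Z ω)) (ℙ : Measure Ω) = P / (1 + P) := by
  have hXg : HasLaw X (gaussianReal 0 P.toNNReal) ℙ := ⟨hX.aemeasurable, hXlaw⟩
  have hZg : HasLaw Z (gaussianReal 0 1) ℙ := ⟨hZ.aemeasurable, hZlaw⟩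
  have hXn n := hXg.integrable_pow (integrable_pow_gaussianReal 0 n)
  have hZn n := hZg.integrable_pow (integrable_pow_gaussianReal 0 n)
  have hX₀ : ∫ ω, X ω = 0 := by rw [hXg.integral_eq, integral_id_gaussianReal]
  have hZ₀ : ∫ ω, Z ω = 0 := by rw [hZg.integral_eq, integral_id_gaussianReal]
  have h1P : 1 + P ≠ 0 := by positivity
  have hform : (fun ω ↦ iP (X ω) (X ω + Z ω)) = fun ω ↦
      (2 * (1 + P))⁻¹ * X ω ^ 2 + (1 + P)⁻¹ * (X ω * Z ω) + (-P / (2 * (1 + P))) * Z ω ^ 2 +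
        1 / 2 * log (1 + P) := by
    ext ω
    rw [hiP]
    field_simp
    ring
  rw [hform, hindep.integral_quadratic hXn hZn, variance_add_const (by fun_prop),
    hindep.variance_quadratic hXn hZn hX₀ hZ₀]
  simp only [hX₀, hZ₀, hXg.integral_pow, hZg.integral_pow, integral_sq_gaussianReal,
    integral_pow_four_gaussianReal, Real.coe_toNNReal P hP.le, NNReal.coe_one]
  constructor <;> field_simp <;> ring
end

section
/- Let τ be a random variable taking values in the non-negative integers with E[τ] ≤ N for some real N > 0. Then the Shannon entropy of τ satisfies H(τ) = −Σ_{k=0}^∞ P(τ = k)·log P(τ = k) ≤ (N + 1)·h_b(1/(N + 1)), where h_b(x) = −x·log x − (1 − x)·log(1 − x) is the binary entropy function (with the convention 0·log 0 = 0). -/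
/-!
Gibbs' inequality compares the law `p` of `τ` with the geometric law `q k = θ (1 - θ) ^ k`:
`H(p) ≤ -∑ p k log q k = -log θ - E[τ] log (1 - θ) ≤ -log θ - N log (1 - θ)`.
The choice `θ = 1 / (N + 1)`, which gives `q` mean `N`, turns the right-hand side into
`(N + 1) h_b(1 / (N + 1))`.
-/

open MeasureTheory ProbabilityTheory Real

theorem MeasureTheory.hasSum_integral_countable {X E : Type*} [MeasurableSpace X] [Countable X]
    [MeasurableSingletonClass X] [NormedAddCommGroup E] [NormedSpace ℝ E] [CompleteSpace E]
    {μ : Measure X} {f : X → E} (hf : Integrable f μ) :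
    HasSum (fun x ↦ μ.real {x} • f x) (∫ x, f x ∂μ) := by
  rw [← Measure.sum_smul_dirac μ] at hf
  have := hasSum_integral_measure hf
  rw [Measure.sum_smul_dirac] at this
  simpa [integral_smul_measure, measureReal_def] using this

theorem Real.negMulLog_le_neg_mul_log_add_sub {p q : ℝ} (hp : 0 ≤ p) (hq : 0 < q) :
    negMulLog p ≤ -(p * log q) + (q - p) := by
  have hsplit : p = q * (p / q) := by field_simp
  have hgibbs := negMulLog_le_one_sub_self (div_nonneg hp hq.le)
  rw [hsplit, negMulLog_mul, negMulLog]
  calc p / q * (-q * log q) + q * negMulLog (p / q)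
      ≤ p / q * (-q * log q) + q * (1 - p / q) := by gcongr
    _ = -(q * (p / q) * log q) + (q - q * (p / q)) := by ring

theorem tsum_negMulLog_le_of_hasSum_mean {p : ℕ → ℝ} (hp0 : ∀ k, 0 ≤ p k) (hp : HasSum p 1)
    {m : ℝ} (hm : HasSum (fun k ↦ k * p k) m) {θ : ℝ} (hθ0 : 0 < θ) (hθ1 : θ < 1) :
    ∑' k, negMulLog (p k) ≤ -log θ - m * log (1 - θ) := by
  set q : ℕ → ℝ := fun k ↦ θ * (1 - θ) ^ k
  have hq : HasSum q 1 := by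
    have h := (hasSum_geometric_of_lt_one (by linarith) (by linarith : 1 - θ < 1)).mul_left θ
    rwa [sub_sub_cancel, mul_inv_cancel₀ hθ0.ne'] at h
  have hbound : ∀ k, negMulLog (p k) ≤ -log θ * p k - log (1 - θ) * (k * p k) + (q k - p k) := by
    intro k
    have hlog : log (q k) = log θ + k * log (1 - θ) := by
      rw [log_mul hθ0.ne' (by positivity), log_pow]
    have := negMulLog_le_neg_mul_log_add_sub (hp0 k) (show 0 < q k by positivity)
    rw [hlog] at this
    linarith
  have hcross : HasSum (fun k ↦ -log θ * p k - log (1 - θ) * (k * p k) + (q k - p k))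
      (-log θ * 1 - log (1 - θ) * m + (1 - 1)) :=
    ((hp.mul_left _).sub (hm.mul_left _)).add (hq.sub hp)
  have hentropy : Summable fun k ↦ negMulLog (p k) :=
    hcross.summable.of_nonneg_of_le
      (fun k ↦ negMulLog_nonneg (hp0 k) (le_hasSum hp k fun j _ ↦ hp0 j)) hbound
  have := hasSum_le hbound hentropy.hasSum hcross
  linarith

theorem tsum_negMulLog_measureReal_le {μ : Measure ℕ} [IsProbabilityMeasure μ]
    (hμ : Integrable (fun n : ℕ ↦ (n : ℝ)) μ) {θ : ℝ} (hθ0 : 0 < θ) (hθ1 : θ < 1) :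
    ∑' k, negMulLog (μ.real {k}) ≤ -log θ - (∫ n, (n : ℝ) ∂μ) * log (1 - θ) := by
  refine tsum_negMulLog_le_of_hasSum_mean (fun _ ↦ measureReal_nonneg) ?_ ?_ hθ0 hθ1
  · simpa using hasSum_integral_countable (integrable_const (1 : ℝ) : Integrable _ μ)
  · simpa [mul_comm] using hasSum_integral_countable hμ

/-- If `τ` is a non-negative integer-valued random variable with `E[τ] ≤ N`
for some real `N > 0`, then its Shannon entropy (in nats) satisfies
`H(τ) = −∑ₖ P(τ = k) log P(τ = k) ≤ (N + 1) · h_b(1/(N + 1))`, where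
`h_b(x) = −x log x − (1 − x) log (1 − x)` is the binary entropy function
(with `0 · log 0 = 0`). -/
theorem entropy_le_of_mean_le
    {Ω : Type*} [MeasureSpace Ω] [IsProbabilityMeasure (ℙ : Measure Ω)]
    (τ : Ω → ℕ) (hτmeas : Measurable τ) (N : ℝ) (hN : 0 < N)
    (hτint : Integrable (fun ω => (τ ω : ℝ)) (ℙ : Measure Ω))
    (hmean : (∫ ω, (τ ω : ℝ)) ≤ N) :
    (∑' k : ℕ, -((ℙ {ω | τ ω = k}).toReal * Real.log (ℙ {ω | τ ω = k}).toReal))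
      ≤ (N + 1) * (-(1/(N+1)) * Real.log (1/(N+1))
          - (1 - 1/(N+1)) * Real.log (1 - 1/(N+1))) := by
  set μ : Measure ℕ := Measure.map τ ℙ
  have : IsProbabilityMeasure μ := Measure.isProbabilityMeasure_map hτmeas.aemeasurable
  have hcast : Measurable (fun n : ℕ ↦ (n : ℝ)) := measurable_from_nat
  have hμint : Integrable (fun n : ℕ ↦ (n : ℝ)) μ :=
    (integrable_map_measure hcast.aestronglyMeasurable hτmeas.aemeasurable).mpr hτint
  have hμmean : ∫ n, (n : ℝ) ∂μ = ∫ ω, (τ ω : ℝ) :=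
    integral_map hτmeas.aemeasurable hcast.aestronglyMeasurable
  have hlaw : ∀ k, (ℙ {ω | τ ω = k}).toReal = μ.real {k} := fun k ↦ by
    rw [measureReal_def, Measure.map_apply hτmeas (measurableSet_singleton k)]; rfl
  have hN1 : 0 < N + 1 := by linarith
  have hθ0 : 0 < 1 / (N + 1) := by positivity
  have hθ1 : 1 / (N + 1) < 1 := by rw [div_lt_one hN1]; linarith
  have hlog : log (1 - 1 / (N + 1)) ≤ 0 := log_nonpos (by linarith) (by linarith)
  calc _ = ∑' k, negMulLog (μ.real {k}) := tsum_congr fun k ↦ by rw [hlaw, negMulLog_eq_neg]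
    _ ≤ -log (1 / (N + 1)) - (∫ n, (n : ℝ) ∂μ) * log (1 - 1 / (N + 1)) :=
      tsum_negMulLog_measureReal_le hμint hθ0 hθ1
    _ ≤ -log (1 / (N + 1)) - N * log (1 - 1 / (N + 1)) := by
      rw [hμmean]; linarith [mul_le_mul_of_nonpos_right hmean hlog]
    _ = _ := by field_simp; ring
end
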